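/- arXiv:1707.01270 — 3 statements merged into one kernel-verified Lean document; each statement's English description precedes it below -/
import Mathlib

section
/- For square matrices of order n, the ternary bracket [A,B,C] = Tr(A)[B,C] + Tr(B)[C,A] + Tr(C)[A,B] satisfies the ternary Filippov–Jacobi identity: [A,B,[C,D,E]] = [[A,B,C],D,E] + [C,[A,B,D],E] + [C,D,[A,B,E]]. -/
open Matrix

/-- ordinary commutator of matrices -/
noncomputable def mcomm {n : ℕ} (X Y : Matrix (Fin n) (Fin n) ℂ) : Matrix (Fin n) (Fin n) ℂ :=
  X * Y - Y * X

/-- ternary bracket [A,B,C] = Tr(A)[B,C] + Tr(B)[C,A] + Tr(C)[A,B] -/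
noncomputable def tripleTr {n : ℕ} (A B C : Matrix (Fin n) (Fin n) ℂ) :
    Matrix (Fin n) (Fin n) ℂ :=
  A.trace • mcomm B C + B.trace • mcomm C A + C.trace • mcomm A B


lemma trace_mcomm {n : ℕ} (X Y : Matrix (Fin n) (Fin n) ℂ) : (mcomm X Y).trace = 0 := by
  simp [mcomm, Matrix.trace_mul_comm X Y]

/-- the ternary Filippov–Jacobi identity for the trace-induced triple bracket -/
theorem tripleTr_filippov {n : ℕ} (A B C D E : Matrix (Fin n) (Fin n) ℂ) :
    tripleTr A B (tripleTr C D E) =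
      tripleTr (tripleTr A B C) D E + tripleTr C (tripleTr A B D) E +
        tripleTr C D (tripleTr A B E) := by
  set_option maxRecDepth 4000 in
  simp only [tripleTr, trace_add, trace_smul, trace_mcomm, mul_zero, smul_zero, zero_smul,
    add_zero, zero_add]
  simp only [mcomm, smul_add, smul_sub, smul_smul, sub_mul, mul_sub, add_mul,
    mul_add, smul_mul_assoc, mul_smul_comm, mul_assoc]
  module
end

section
/- In glt(2,2) with Dirac matrices γ₀ = [[0,-iE₂],[iE₂,0]], γ_a = [[0,σ_a],[σ_a,0]] (a=1,2,3), and γ₅ = γ₀γ₁γ₂γ₃, the graded triple bracket satisfies [γ_μ, γ_ν, γ₅] = 8·δ_{μν}·E₄ for all μ, ν ∈ {0,1,2,3}. -/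
open Matrix

/-- The space of (m+n)×(m+n) complex block matrices, `gl(m,n)`. -/
abbrev GLmn (m n : ℕ) := Matrix (Fin m ⊕ Fin n) (Fin m ⊕ Fin n) ℂ

/-- block parity of an index: `false` for the first block, `true` for the second. -/
def blockPar {m n : ℕ} : Fin m ⊕ Fin n → Bool := Sum.elim (fun _ => false) (fun _ => true)

/-- `X` is homogeneous of degree `b` (b = false: even, b = true: odd). -/
def IsHom {m n : ℕ} (b : Bool) (X : GLmn m n) : Prop :=
  ∀ i j, xor (blockPar i) (blockPar j) ≠ b → X i j = 0

/-- the supertrace `Str [[A,B],[C,D]] = Tr A - Tr D`. -/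
noncomputable def Str {m n : ℕ} (X : GLmn m n) : ℂ :=
  ∑ i, X (Sum.inl i) (Sum.inl i) - ∑ j, X (Sum.inr j) (Sum.inr j)

/-- the sign `(-1)^b`. -/
noncomputable def sgn (b : Bool) : ℂ := if b then -1 else 1

/-- graded commutator of matrices of degrees `x`, `y`:  `XY - (-1)^{xy} YX`. -/
noncomputable def gcomm {m n : ℕ} (x y : Bool) (X Y : GLmn m n) : GLmn m n :=
  X * Y - sgn (x && y) • (Y * X)

/-- the graded triple bracket
`[X,Y,Z] = Str X [Y,Z] + (-1)^{(y+z)x} Str Y [Z,X] + (-1)^{z(x+y)} Str Z [X,Y]`. -/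
noncomputable def tbr {m n : ℕ} (x y z : Bool) (X Y Z : GLmn m n) : GLmn m n :=
  Str X • gcomm y z Y Z + sgn (x && xor y z) • Str Y • gcomm z x Z X +
    sgn (z && xor x y) • Str Z • gcomm x y X Y

/-- the Pauli matrices σ₁, σ₂, σ₃ -/
noncomputable def sigma : Fin 3 → Matrix (Fin 2) (Fin 2) ℂ :=
  ![!![0, 1; 1, 0], !![0, -Complex.I; Complex.I, 0], !![1, 0; 0, -1]]

/-- the Dirac matrices γ₀ = [[0,-iE₂],[iE₂,0]], γ_a = [[0,σ_a],[σ_a,0]] -/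
noncomputable def diracGamma : Fin 4 → GLmn 2 2 :=
  ![Matrix.fromBlocks 0 (-Complex.I • (1 : Matrix (Fin 2) (Fin 2) ℂ))
      (Complex.I • (1 : Matrix (Fin 2) (Fin 2) ℂ)) 0,
    Matrix.fromBlocks 0 (sigma 0) (sigma 0) 0,
    Matrix.fromBlocks 0 (sigma 1) (sigma 1) 0,
    Matrix.fromBlocks 0 (sigma 2) (sigma 2) 0]

/-- γ₅ = γ₀γ₁γ₂γ₃ -/
noncomputable def gamma5 : GLmn 2 2 :=
  diracGamma 0 * diracGamma 1 * diracGamma 2 * diracGamma 3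

set_option maxHeartbeats 4000000 in
lemma anticomm (μ ν : Fin 4) :
    diracGamma μ * diracGamma ν + diracGamma ν * diracGamma μ =
      (if μ = ν then (2 : ℂ) else 0) • (1 : GLmn 2 2) := by
  fin_cases μ <;> fin_cases ν <;>
  · ext i j
    rcases i with i|i <;> rcases j with j|j <;> fin_cases i <;> fin_cases j <;>
    · simp [diracGamma, sigma, Matrix.mul_apply, Fin.sum_univ_succ, Matrix.fromBlocks,
        Matrix.one_apply] <;> (ring_nf; all_goals simp [Complex.I_sq])

lemma gamma5_eq : gamma5 = Matrix.fromBlocks 1 0 0 (-1) := by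
  show diracGamma 0 * diracGamma 1 * diracGamma 2 * diracGamma 3 = _
  ext i j
  rcases i with i|i <;> rcases j with j|j <;> fin_cases i <;> fin_cases j <;>
  · simp [diracGamma, sigma, Matrix.mul_apply, Fin.sum_univ_succ, Matrix.fromBlocks,
      Matrix.one_apply] <;> (ring_nf; all_goals simp [Complex.I_sq])

lemma Str_gamma5 : Str gamma5 = 4 := by
  rw [gamma5_eq]; simp [Str, Fin.sum_univ_succ, Matrix.fromBlocks]; norm_num

lemma Str_gamma (μ : Fin 4) : Str (diracGamma μ) = 0 := by
  fin_cases μ <;> simp [Str, diracGamma, Fin.sum_univ_succ, Matrix.fromBlocks]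

/-- In glt(2,2): `[γ_μ, γ_ν, γ₅] = 8 δ_{μν} E₄` for all μ, ν. -/
theorem dirac_triple_bracket (μ ν : Fin 4) :
    tbr true true false (diracGamma μ) (diracGamma ν) gamma5 =
      (if μ = ν then (8 : ℂ) else 0) • (1 : GLmn 2 2) := by
  simp only [tbr, Str_gamma, Str_gamma5, zero_smul, smul_zero, zero_add, add_zero,
    gcomm, sgn]
  norm_num
  rw [← smul_add, anticomm μ ν]
  split <;> simp [smul_smul] <;> norm_num
end

section
/- In the Clifford algebra C_n (n = 2m) realized as End(ℂ^{2^m}) via the graded tensor product of m copies of the Pauli representation, the supertrace of the top monomial γ_N (N = {1,…,n}) equals (2i)^m, and the supertrace of γ_I vanishes for every proper subset I ⊊ N. -/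
open Finset

/-- entries of the Pauli matrix σ₁ -/
noncomputable def pEnt1 : Fin 2 → Fin 2 → ℂ := fun a b => if a ≠ b then 1 else 0

/-- entries of the Pauli matrix σ₂ -/
noncomputable def pEnt2 : Fin 2 → Fin 2 → ℂ := fun a b =>
  if a = 0 ∧ b = 1 then -Complex.I else if a = 1 ∧ b = 0 then Complex.I else 0

/-- entries of the Pauli matrix σ₃ -/
noncomputable def pEnt3 : Fin 2 → Fin 2 → ℂ := fun a b =>
  if a = b then (if a = 0 then 1 else -1) else 0

/-- The generator `γ_k` (k = 0,…,2m-1) of the Clifford algebra `C_{2m}` realized on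
`End(ℂ^{2^m}) = Matrix (Fin m → Fin 2)`: via the graded tensor product of `m` copies
of the Pauli representation, `γ_{2j-1}`, `γ_{2j}` act as σ₁, σ₂ in the `j`-th factor
(graded tensor product = Jordan–Wigner: σ₃'s in the earlier factors). -/
noncomputable def cliffGen (m : ℕ) (k : Fin (2 * m)) :
    Matrix (Fin m → Fin 2) (Fin m → Fin 2) ℂ :=
  Matrix.of fun f g => ∏ l : Fin m,
    if (l : ℕ) < (k : ℕ) / 2 then pEnt3 (f l) (g l)
    else if (l : ℕ) = (k : ℕ) / 2 then
      (if (k : ℕ) % 2 = 0 then pEnt1 else pEnt2) (f l) (g l)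
    else if f l = g l then 1 else 0

/-- the monomial `γ_I` : ordered product of the generators indexed by `I` -/
noncomputable def cliffMon (m : ℕ) (I : Finset (Fin (2 * m))) :
    Matrix (Fin m → Fin 2) (Fin m → Fin 2) ℂ :=
  ((I.sort (· ≤ ·)).map (cliffGen m)).prod

/-- the supertrace on `End(ℂ^{2^m})` for the grading given by σ₃ in each factor -/
noncomputable def cliffStr (m : ℕ)
    (X : Matrix (Fin m → Fin 2) (Fin m → Fin 2) ℂ) : ℂ :=
  ∑ f : Fin m → Fin 2, (∏ l : Fin m, if f l = 0 then (1 : ℂ) else -1) * X f f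

/-! ### Auxiliary material: Pauli matrices and the graded tensor structure -/

noncomputable def s1 : Matrix (Fin 2) (Fin 2) ℂ := Matrix.of pEnt1
noncomputable def s2 : Matrix (Fin 2) (Fin 2) ℂ := Matrix.of pEnt2
noncomputable def s3 : Matrix (Fin 2) (Fin 2) ℂ := Matrix.of pEnt3

/-- the 2×2 supertrace -/
noncomputable def str2 (A : Matrix (Fin 2) (Fin 2) ℂ) : ℂ := A 0 0 - A 1 1

lemma s3_mul_s3 : s3 * s3 = 1 := by
  ext a b
  fin_cases a <;> fin_cases b <;>
    simp [s3, Matrix.mul_apply, Fin.sum_univ_two, pEnt3, Matrix.one_apply]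

lemma s3_pow_even {c : ℕ} (h : Even c) : s3 ^ c = 1 := by
  obtain ⟨t, rfl⟩ := h
  rw [show t + t = 2 * t by ring, pow_mul, sq, s3_mul_s3, one_pow]

lemma str2_one : str2 1 = 0 := by simp [str2, Matrix.one_apply]
lemma str2_s1 : str2 s1 = 0 := by simp [str2, s1, pEnt1]
lemma str2_s2 : str2 s2 = 0 := by simp [str2, s2, pEnt2]
lemma str2_s1s2 : str2 (s1 * s2) = 2 * Complex.I := by
  simp [str2, s1, s2, Matrix.mul_apply, Fin.sum_univ_two, pEnt1, pEnt2]
  ring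

/-- the graded tensor product of `m` 2×2 matrices -/
noncomputable def tens (m : ℕ) (A : Fin m → Matrix (Fin 2) (Fin 2) ℂ) :
    Matrix (Fin m → Fin 2) (Fin m → Fin 2) ℂ :=
  Matrix.of fun f g => ∏ l, A l (f l) (g l)

lemma tens_mul {m : ℕ} (A B : Fin m → Matrix (Fin 2) (Fin 2) ℂ) :
    tens m A * tens m B = tens m fun l => A l * B l := by
  ext f g
  simp only [tens, Matrix.mul_apply, Matrix.of_apply]
  rw [Finset.prod_univ_sum, Fintype.piFinset_univ]
  exact Finset.sum_congr rfl fun h _ => (Finset.prod_mul_distrib).symm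

lemma tens_one (m : ℕ) : tens m (fun _ => (1 : Matrix (Fin 2) (Fin 2) ℂ)) = 1 := by
  ext f g
  simp only [tens, Matrix.of_apply]
  by_cases h : f = g
  · subst h; simp [Matrix.one_apply]
  · rw [Matrix.one_apply_ne h]
    obtain ⟨l, hl⟩ : ∃ l, f l ≠ g l := by
      by_contra hc; push_neg at hc; exact h (funext hc)
    exact Finset.prod_eq_zero (Finset.mem_univ l) (Matrix.one_apply_ne hl)

/-- the supertrace is multiplicative over the graded tensor product -/
lemma str_tens (m : ℕ) (A : Fin m → Matrix (Fin 2) (Fin 2) ℂ) :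
    cliffStr m (tens m A) = ∏ l, str2 (A l) := by
  have h : ∀ l, str2 (A l) = ∑ x : Fin 2, (if x = 0 then (1:ℂ) else -1) * A l x x := by
    intro l; simp [Fin.sum_univ_two, str2]; ring
  simp only [h]
  rw [Finset.prod_univ_sum, Fintype.piFinset_univ]
  unfold cliffStr
  exact Finset.sum_congr rfl fun f _ => by
    simp only [tens, Matrix.of_apply, ← Finset.prod_mul_distrib]

/-- the `l`-th tensor factor of the generator `γ_k` -/
noncomputable def EE (k l : ℕ) : Matrix (Fin 2) (Fin 2) ℂ :=
  Matrix.of fun a b =>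
    if l < k / 2 then pEnt3 a b
    else if l = k / 2 then (if k % 2 = 0 then pEnt1 else pEnt2) a b
    else if a = b then 1 else 0

lemma cliffGen_eq (m : ℕ) (k : Fin (2 * m)) :
    cliffGen m k = tens m fun l => EE (k : ℕ) (l : ℕ) := rfl

lemma EE_lt {k l : ℕ} (h : k < 2 * l) : EE k l = 1 := by
  ext a b
  rw [EE, Matrix.of_apply, if_neg (by omega), if_neg (by omega), Matrix.one_apply]

lemma EE_even (l : ℕ) : EE (2 * l) l = s1 := by
  ext a b
  rw [EE, Matrix.of_apply, if_neg (by omega), if_pos (by omega), if_pos (by omega)]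
  rfl

lemma EE_odd (l : ℕ) : EE (2 * l + 1) l = s2 := by
  ext a b
  rw [EE, Matrix.of_apply, if_neg (by omega), if_pos (by omega), if_neg (by omega)]
  rfl

lemma EE_gt {k l : ℕ} (h : 2 * l + 1 < k) : EE k l = s3 := by
  ext a b
  rw [EE, Matrix.of_apply, if_pos (by omega)]
  rfl

/-- the `l`-th tensor factor of the monomial `γ_I` -/
noncomputable def prodE (L : List ℕ) (l : ℕ) : Matrix (Fin 2) (Fin 2) ℂ :=
  (L.map fun k => EE k l).prod

set_option linter.unnecessarySimpa false in
set_option linter.unreachableTactic false in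
set_option linter.unusedTactic false in
/-- computation of the `l`-th tensor factor of `γ_I` for a sorted index list -/
lemma prodE_eq (l : ℕ) : ∀ (L : List ℕ), L.Pairwise (· < ·) →
    prodE L l = (if 2*l ∈ L then s1 else 1) * (if 2*l+1 ∈ L then s2 else 1) *
      s3 ^ (L.filter (fun k => 2*l+1 < k)).length
  | [], _ => by simp [prodE]
  | k :: T, h => by
    have hk : ∀ x ∈ T, k < x := (List.pairwise_cons.1 h).1
    have IH := prodE_eq l T (List.pairwise_cons.1 h).2
    have hcons : prodE (k :: T) l = EE k l * prodE T l := by simp [prodE]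
    rcases Nat.lt_trichotomy k (2*l) with h1 | h1 | h1
    · have e1 : (2*l ∈ k :: T) ↔ (2*l ∈ T) := by
        rw [List.mem_cons]; exact or_iff_right (by omega)
      have e2 : (2*l+1 ∈ k :: T) ↔ (2*l+1 ∈ T) := by
        rw [List.mem_cons]; exact or_iff_right (by omega)
      rw [hcons, EE_lt h1, one_mul, IH,
        List.filter_cons_of_neg (by simpa using by omega)]
      simp only [e1, e2]
    · subst h1
      have hnT : 2*l ∉ T := fun hx => absurd (hk _ hx) (by omega)
      have e2 : (2*l+1 ∈ 2*l :: T) ↔ (2*l+1 ∈ T) := by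
        rw [List.mem_cons]; exact or_iff_right (by omega)
      rw [hcons, EE_even, IH, if_neg hnT, one_mul,
        List.filter_cons_of_neg (by simpa using by omega),
        if_pos (List.mem_cons_self)]
      simp only [e2, mul_assoc]
    · by_cases h2 : k = 2*l+1
      · subst h2
        have hn1 : 2*l ∉ ((2*l+1) :: T) := by
          rw [List.mem_cons]; push_neg
          exact ⟨by omega, fun hx => absurd (hk _ hx) (by omega)⟩
        have hn2 : 2*l+1 ∉ T := fun hx => absurd (hk _ hx) (by omega)
        rw [hcons, EE_odd, IH, if_neg (fun hx => hn1 (List.mem_cons_of_mem _ hx)),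
          if_neg hn2, one_mul, one_mul,
          List.filter_cons_of_neg (by simpa using by omega),
          if_neg hn1, if_pos (List.mem_cons_self), one_mul]
      · have h3 : 2*l+1 < k := by omega
        have hn1 : 2*l ∉ (k :: T) := by
          rw [List.mem_cons]; push_neg
          exact ⟨by omega, fun hx => absurd (hk _ hx) (by omega)⟩
        have hn2 : 2*l+1 ∉ (k :: T) := by
          rw [List.mem_cons]; push_neg
          exact ⟨by omega, fun hx => absurd (hk _ hx) (by omega)⟩
        rw [hcons, EE_gt h3, IH,
          if_neg (fun hx => hn1 (List.mem_cons_of_mem _ hx)),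
          if_neg (fun hx => hn2 (List.mem_cons_of_mem _ hx)),
          List.filter_cons_of_pos (by simpa using h3),
          if_neg hn1, if_neg hn2]
        simp [pow_succ']

/-- the list of natural-number values of the indices of `I`, in increasing order -/
def valList {n : ℕ} (I : Finset (Fin n)) : List ℕ := (I.sort (· ≤ ·)).map Fin.val

lemma sorted_valList {n : ℕ} (I : Finset (Fin n)) : (valList I).Pairwise (· < ·) := by
  unfold valList
  exact List.Pairwise.map Fin.val (fun a b hab => hab) (Finset.sortedLT_sort I).pairwise

lemma mem_valList {n : ℕ} (I : Finset (Fin n)) (x : ℕ) :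
    x ∈ valList I ↔ ∃ k : Fin n, k ∈ I ∧ (k : ℕ) = x := by
  simp only [valList, List.mem_map, Finset.mem_sort]

lemma range_filter_len (a : ℕ) : ∀ n : ℕ,
    ((List.range n).filter (fun k => a < k)).length = n - (a+1)
  | 0 => by simp
  | n+1 => by
    rw [List.range_succ, List.filter_append, List.length_append, range_filter_len a n]
    by_cases h : a < n
    · simp only [List.filter_cons, List.filter_nil, decide_eq_true_eq, if_pos h]
      simp; omega
    · simp only [List.filter_cons, List.filter_nil, decide_eq_true_eq, if_neg h]
      simp; omega

lemma sorted_eq_of_mem {L1 L2 : List ℕ} (h1 : L1.Pairwise (· < ·)) (h2 : L2.Pairwise (· < ·))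
    (h : ∀ x, x ∈ L1 ↔ x ∈ L2) : L1 = L2 := by
  haveI : IsAntisymm ℕ (· < ·) := ⟨fun a b hab hba => by omega⟩
  exact List.Perm.eq_of_pairwise' h1 h2 ((List.perm_ext_iff_of_nodup h1.nodup h2.nodup).2 h)

lemma filter_eq_range {n : ℕ} (I : Finset (Fin n)) (a : ℕ)
    (hbig : ∀ k : Fin n, a < (k : ℕ) → k ∈ I) :
    (valList I).filter (fun k => a < k) = (List.range n).filter (fun k => a < k) := by
  apply sorted_eq_of_mem ((sorted_valList I).filter _) ((List.pairwise_lt_range (n := n)).filter _)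
  intro x
  simp only [List.mem_filter, mem_valList, List.mem_range, decide_eq_true_eq]
  constructor
  · rintro ⟨⟨k, _, rfl⟩, hx⟩; exact ⟨k.isLt, hx⟩
  · rintro ⟨hx, ha⟩; exact ⟨⟨⟨x, hx⟩, hbig _ ha, rfl⟩, ha⟩

lemma mon_list (m : ℕ) : ∀ L : List (Fin (2*m)),
    (L.map (cliffGen m)).prod = tens m (fun l => prodE (L.map Fin.val) (l : ℕ))
  | [] => by
    simp only [List.map_nil, List.prod_nil, prodE]
    exact (tens_one m).symm
  | k :: L => by
    have IH := mon_list m L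
    rw [List.map_cons, List.prod_cons, IH, cliffGen_eq, tens_mul]
    congr 1

lemma str_mon (m : ℕ) (I : Finset (Fin (2*m))) :
    cliffStr m (cliffMon m I) = ∏ l : Fin m,
      str2 ((if 2*(l:ℕ) ∈ valList I then s1 else 1) *
        (if 2*(l:ℕ)+1 ∈ valList I then s2 else 1) *
        s3 ^ ((valList I).filter (fun k => 2*(l:ℕ)+1 < k)).length) := by
  rw [cliffMon, mon_list m _, str_tens]
  exact Finset.prod_congr rfl fun l _ =>
    congrArg str2 (prodE_eq ((l:ℕ)) (valList I) (sorted_valList I))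

/-- In `C_{2m}` realized on `End(ℂ^{2^m})`, the supertrace of the top monomial `γ_N`
is `(2i)^m`, while the supertrace of `γ_I` vanishes for every proper subset `I ⊊ N`. -/
theorem cliff_supertrace (m : ℕ) :
    cliffStr m (cliffMon m Finset.univ) = (2 * Complex.I) ^ m ∧
      ∀ I : Finset (Fin (2 * m)), I ⊂ Finset.univ → cliffStr m (cliffMon m I) = 0 := by
  constructor
  · rw [str_mon]
    have hmem : ∀ x, x < 2*m → x ∈ valList (univ : Finset (Fin (2*m))) := fun x hx =>
      (mem_valList _ _).2 ⟨⟨x, hx⟩, mem_univ _, rfl⟩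
    have key : ∀ l : Fin m,
        str2 ((if 2*(l:ℕ) ∈ valList (univ : Finset (Fin (2*m))) then s1 else 1) *
          (if 2*(l:ℕ)+1 ∈ valList (univ : Finset (Fin (2*m))) then s2 else 1) *
          s3 ^ (((valList (univ : Finset (Fin (2*m)))).filter
            (fun k => 2*(l:ℕ)+1 < k)).length)) = 2 * Complex.I := by
      intro l
      have hl := l.isLt
      rw [filter_eq_range _ _ (fun k _ => mem_univ k), range_filter_len,
        if_pos (hmem _ (by omega)), if_pos (hmem _ (by omega)),
        s3_pow_even ⟨m - ((l:ℕ)+1), by omega⟩, mul_one, str2_s1s2]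
    rw [Finset.prod_congr rfl fun l _ => key l, Finset.prod_const, Finset.card_univ,
      Fintype.card_fin]
  · intro I hI
    have hne : ((univ : Finset (Fin (2*m))) \ I).Nonempty := by
      rw [Finset.sdiff_nonempty]
      exact fun hsub => hI.ne (Finset.univ_subset_iff.mp hsub)
    set k0 := ((univ : Finset (Fin (2*m))) \ I).max' hne with hk0def
    have hk0 : k0 ∉ I := (Finset.mem_sdiff.1 ((univ \ I).max'_mem hne)).2
    have hlt := k0.isLt
    have hbig : ∀ k : Fin (2*m), 2*((k0:ℕ)/2)+1 < (k:ℕ) → k ∈ I := by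
      intro k hk
      by_contra hki
      have hle : k ≤ k0 := Finset.le_max' _ _ (Finset.mem_sdiff.2 ⟨mem_univ _, hki⟩)
      rw [Fin.le_def] at hle
      omega
    have hm : (k0:ℕ)/2 < m := by omega
    rw [str_mon]
    apply Finset.prod_eq_zero (Finset.mem_univ (⟨(k0:ℕ)/2, hm⟩ : Fin m))
    rw [show ((⟨(k0:ℕ)/2, hm⟩ : Fin m) : ℕ) = (k0:ℕ)/2 from rfl,
      filter_eq_range _ _ hbig, range_filter_len,
      s3_pow_even ⟨m - ((k0:ℕ)/2 + 1), by omega⟩, mul_one]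
    by_cases hp : (k0:ℕ) % 2 = 0
    · have hnm : 2*((k0:ℕ)/2) ∉ valList I := by
        rw [mem_valList]
        rintro ⟨j, hj, hjv⟩
        have hj0 : j = k0 := Fin.ext (by omega)
        exact hk0 (hj0 ▸ hj)
      rw [if_neg hnm, one_mul]
      by_cases hq : 2*((k0:ℕ)/2)+1 ∈ valList I
      · rw [if_pos hq]; exact str2_s2
      · rw [if_neg hq]; exact str2_one
    · have hnm : 2*((k0:ℕ)/2)+1 ∉ valList I := by
        rw [mem_valList]
        rintro ⟨j, hj, hjv⟩
        have hj0 : j = k0 := Fin.ext (by omega)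
        exact hk0 (hj0 ▸ hj)
      rw [if_neg hnm, mul_one]
      by_cases hq : 2*((k0:ℕ)/2) ∈ valList I
      · rw [if_pos hq]; exact str2_s1
      · rw [if_neg hq]; exact str2_one
end
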